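/- Let N ⊂ ℝ² be a parallelogram centered at the origin formed by two congruent triangles K₁, K₂ sharing a diagonal. Let r : ℝ² → ℝ² be a linear (affine with r(0) = 0) vector field. Define Π r piecewise on each K_i as the unique function in RT(K_i) = (P₀(K_i))² + x P₀(K_i) whose normal components have the same edge averages as r on each edge of K_i. Then ∫_N (r − Π r) dx = 0. -/

import Mathlib

open MeasureTheory

/-- The lowest-order Raviart–Thomas edge degree-of-freedom condition: the
integral over the segment `[P, Q]` of the normal component of `q` vanishes
(the normal being the rotation of `Q - P`). -/
noncomputable def edgeCond (q : ℝ × ℝ → ℝ × ℝ) (P Q : ℝ × ℝ) : Prop :=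
  ∫ t in (0 : ℝ)..1,
      ((q (P + t • (Q - P))).1 * (-(Q - P).2) +
        (q (P + t • (Q - P))).2 * (Q - P).1) = 0

/-- A field of the lowest-order Raviart–Thomas shape space `a + c • x`. -/
def IsRT (p : ℝ × ℝ → ℝ × ℝ) : Prop :=
  ∃ (a : ℝ × ℝ) (c : ℝ), p = fun x => a + c • x

/-! The lowest-order Raviart–Thomas element is unisolvent: a field `a + c • x` whose normal
components have zero mean on the three edges of a nondegenerate triangle vanishes, because its
normal component is constant along each edge. The point reflection `x ↦ -x` maps `K₁` onto `K₂`
and, `r` being odd, maps the edge conditions of `Π₁` to those of `x ↦ -Π₁ (-x)` on `K₂`; by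
unisolvence `Π₂ x = -Π₁ (-x)`. So `r - Π r` is odd on `N` and the two integrals cancel. -/

theorem setIntegral_neg_comp_neg {G E : Type*} [MeasurableSpace G] [InvolutiveNeg G]
    [MeasurableNeg G] [NormedAddCommGroup E] [NormedSpace ℝ E] (μ : Measure G)
    [μ.IsNegInvariant] (f : G → E) (s : Set G) :
    ∫ x in -s, f (-x) ∂μ = ∫ x in s, f x ∂μ :=
  (Measure.measurePreserving_neg μ).setIntegral_preimage_emb measurableEmbedding_neg f s

def cross (u v : ℝ × ℝ) : ℝ := u.1 * v.2 - u.2 * v.1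

lemma cross_ne_zero_of_not_collinear {P Q R : ℝ × ℝ}
    (h : ¬ Collinear ℝ ({P, Q, R} : Set (ℝ × ℝ))) : cross (Q - P) (R - P) ≠ 0 := by
  intro hc
  apply h
  rw [collinear_iff_exists_forall_eq_smul_vadd]
  by_cases hQP : Q - P = 0
  · refine ⟨P, R - P, ?_⟩
    simp only [Set.mem_insert_iff, Set.mem_singleton_iff]
    rintro p (rfl | rfl | rfl)
    · exact ⟨0, by simp⟩
    · exact ⟨0, by simpa [sub_eq_zero] using hQP⟩
    · exact ⟨1, by simp⟩
  · have hnorm : (Q - P).1 ^ 2 + (Q - P).2 ^ 2 ≠ 0 := by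
      contrapose! hQP
      ext <;> simp only [Prod.fst_zero, Prod.snd_zero] <;>
        nlinarith [sq_nonneg (Q - P).1, sq_nonneg (Q - P).2]
    refine ⟨P, Q - P, ?_⟩
    simp only [Set.mem_insert_iff, Set.mem_singleton_iff]
    rintro p (rfl | rfl | rfl)
    · exact ⟨0, by simp⟩
    · exact ⟨1, by simp⟩
    -- the coefficient of the orthogonal projection of `p - P` onto `Q - P`
    · refine ⟨((p - P).1 * (Q - P).1 + (p - P).2 * (Q - P).2) /
        ((Q - P).1 ^ 2 + (Q - P).2 ^ 2), ?_⟩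
      rw [eq_vadd_iff_vsub_eq, vsub_eq_sub]
      unfold cross at hc
      ext <;> simp only [Prod.smul_fst, Prod.smul_snd, smul_eq_mul] <;> field_simp
      · linear_combination -(Q - P).2 * hc
      · linear_combination (Q - P).1 * hc

lemma IsRT.continuous {p : ℝ × ℝ → ℝ × ℝ} (hp : IsRT p) : Continuous p := by
  obtain ⟨a, c, rfl⟩ := hp
  fun_prop

lemma IsRT.sub {p p' : ℝ × ℝ → ℝ × ℝ} (hp : IsRT p) (hp' : IsRT p') :
    IsRT (fun x => p x - p' x) := by
  obtain ⟨a, c, rfl⟩ := hp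
  obtain ⟨a', c', rfl⟩ := hp'
  exact ⟨a - a', c - c', by ext x <;> simp <;> ring⟩

lemma IsRT.neg_comp_neg {p : ℝ × ℝ → ℝ × ℝ} (hp : IsRT p) : IsRT (fun x => -p (-x)) := by
  obtain ⟨a, c, rfl⟩ := hp
  exact ⟨-a, c, by ext x <;> simp <;> ring⟩

lemma edgeCond_iff (q : ℝ × ℝ → ℝ × ℝ) (P Q : ℝ × ℝ) :
    edgeCond q P Q ↔ ∫ t in (0 : ℝ)..1, cross (Q - P) (q (P + t • (Q - P))) = 0 := by
  unfold edgeCond cross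
  refine Iff.of_eq (congrArg (· = 0) (intervalIntegral.integral_congr fun t _ => ?_))
  ring

lemma edgeCond_sub {q q' : ℝ × ℝ → ℝ × ℝ} (hq : Continuous q) (hq' : Continuous q')
    {P Q : ℝ × ℝ} (h : edgeCond q P Q) (h' : edgeCond q' P Q) :
    edgeCond (fun x => q x - q' x) P Q := by
  rw [edgeCond_iff] at *
  have hint : ∀ g : ℝ × ℝ → ℝ × ℝ, Continuous g →
      IntervalIntegrable (fun t : ℝ => cross (Q - P) (g (P + t • (Q - P)))) volume 0 1 := by
    intro g hg
    apply Continuous.intervalIntegrable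
    unfold cross
    fun_prop
  calc ∫ t in (0 : ℝ)..1, cross (Q - P) ((fun x => q x - q' x) (P + t • (Q - P)))
      = ∫ t in (0 : ℝ)..1, (cross (Q - P) (q (P + t • (Q - P)))
          - cross (Q - P) (q' (P + t • (Q - P)))) := by
        congr 1; funext t; simp only [cross, Prod.fst_sub, Prod.snd_sub]; ring
    _ = 0 := by rw [intervalIntegral.integral_sub (hint q hq) (hint q' hq'), h, h', sub_zero]

lemma edgeCond_neg_comp_neg {q : ℝ × ℝ → ℝ × ℝ} {P Q : ℝ × ℝ} (h : edgeCond q P Q) :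
    edgeCond (fun x => -q (-x)) (-P) (-Q) := by
  rw [edgeCond_iff] at *
  convert h using 3 with t
  have hpt : -(-P + t • (-Q - -P)) = P + t • (Q - P) := by module
  rw [hpt]
  simp only [cross, Prod.fst_sub, Prod.snd_sub, Prod.fst_neg, Prod.snd_neg]
  ring

lemma edgeCond_rt_iff (a : ℝ × ℝ) (c : ℝ) (P Q : ℝ × ℝ) :
    edgeCond (fun x => a + c • x) P Q ↔ cross (Q - P) (a + c • P) = 0 := by
  have hconst : ∀ t : ℝ,
      cross (Q - P) (a + c • (P + t • (Q - P))) = cross (Q - P) (a + c • P) := by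
    intro t
    simp only [cross, Prod.fst_add, Prod.snd_add, Prod.smul_fst, Prod.smul_snd, smul_eq_mul]
    ring
  rw [edgeCond_iff]
  simp only [hconst, intervalIntegral.integral_const]
  simp

lemma IsRT.eq_zero_of_edgeCond {p : ℝ × ℝ → ℝ × ℝ} (hp : IsRT p) {P Q R : ℝ × ℝ}
    (hPQR : cross (Q - P) (R - P) ≠ 0)
    (h₁ : edgeCond p P Q) (h₂ : edgeCond p Q R) (h₃ : edgeCond p R P) : p = 0 := by
  obtain ⟨a, c, rfl⟩ := hp
  rw [edgeCond_rt_iff] at h₁ h₂ h₃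
  simp only [cross, Prod.fst_add, Prod.snd_add, Prod.fst_sub, Prod.snd_sub, Prod.smul_fst,
    Prod.smul_snd, smul_eq_mul] at h₁ h₂ h₃
  -- summing the three conditions eliminates `a`, leaving `c` times twice the signed area
  have hc : c * cross (Q - P) (R - P) = 0 := by
    simp only [cross, Prod.fst_sub, Prod.snd_sub]
    linear_combination -(h₁ + h₂ + h₃)
  rw [(mul_eq_zero.mp hc).resolve_right hPQR] at h₁ h₃ ⊢
  have ha₁ : a.1 * cross (Q - P) (R - P) = 0 := by
    simp only [cross, Prod.fst_sub, Prod.snd_sub]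
    linear_combination (Q.1 - P.1) * h₃ + (R.1 - P.1) * h₁
  have ha₂ : a.2 * cross (Q - P) (R - P) = 0 := by
    simp only [cross, Prod.fst_sub, Prod.snd_sub]
    linear_combination (Q.2 - P.2) * h₃ + (R.2 - P.2) * h₁
  funext x
  ext
  · simpa using (mul_eq_zero.mp ha₁).resolve_right hPQR
  · simpa using (mul_eq_zero.mp ha₂).resolve_right hPQR

lemma IsRT.eq_of_edgeCond {p p' f : ℝ × ℝ → ℝ × ℝ} (hp : IsRT p) (hp' : IsRT p')
    (hf : Continuous f) {P Q R : ℝ × ℝ} (hPQR : cross (Q - P) (R - P) ≠ 0)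
    (h₁ : edgeCond (fun x => p x - f x) P Q) (h₂ : edgeCond (fun x => p x - f x) Q R)
    (h₃ : edgeCond (fun x => p x - f x) R P)
    (h₁' : edgeCond (fun x => p' x - f x) P Q) (h₂' : edgeCond (fun x => p' x - f x) Q R)
    (h₃' : edgeCond (fun x => p' x - f x) R P) : p = p' := by
  have hcont : ∀ g, IsRT g → Continuous (fun x => g x - f x) := fun g hg => hg.continuous.sub hf
  have hdiff : (fun x => p x - p' x) = fun x => (p x - f x) - (p' x - f x) := by
    ext x <;> simp
  have := (hp.sub hp').eq_zero_of_edgeCond hPQR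
    (hdiff ▸ edgeCond_sub (hcont p hp) (hcont p' hp') h₁ h₁')
    (hdiff ▸ edgeCond_sub (hcont p hp) (hcont p' hp') h₂ h₂')
    (hdiff ▸ edgeCond_sub (hcont p hp) (hcont p' hp') h₃ h₃')
  funext x
  exact sub_eq_zero.mp (congrFun this x)

/-- Let `N` be the parallelogram centered at the origin formed by the triangles
`K₁ = conv{A, B, -B}` and `K₂ = conv{-A, -B, B}` sharing the diagonal `[B,-B]`,
let `r` be a linear vector field, and let `Pi₁, Pi₂` be its lowest-order
Raviart–Thomas interpolants on `K₁, K₂` (normal edge averages agree with `r`).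
Then `∫_N (r - Π r) dx = 0`. -/
theorem stmt9 (A B : ℝ × ℝ) (hnd : ¬ Collinear ℝ ({A, B, -B} : Set (ℝ × ℝ)))
    (r : (ℝ × ℝ) →ₗ[ℝ] (ℝ × ℝ))
    (Pi₁ Pi₂ : ℝ × ℝ → ℝ × ℝ) (hPi₁ : IsRT Pi₁) (hPi₂ : IsRT Pi₂)
    (he₁ : edgeCond (fun x => Pi₁ x - r x) A B)
    (he₂ : edgeCond (fun x => Pi₁ x - r x) B (-B))
    (he₃ : edgeCond (fun x => Pi₁ x - r x) (-B) A)
    (hf₁ : edgeCond (fun x => Pi₂ x - r x) (-A) (-B))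
    (hf₂ : edgeCond (fun x => Pi₂ x - r x) (-B) B)
    (hf₃ : edgeCond (fun x => Pi₂ x - r x) B (-A)) :
    (∫ x in convexHull ℝ ({A, B, -B} : Set (ℝ × ℝ)), (r x - Pi₁ x)) +
      (∫ x in convexHull ℝ ({-A, -B, B} : Set (ℝ × ℝ)), (r x - Pi₂ x)) = 0 := by
  have hK₂ : cross (-B - -A) (B - -A) ≠ 0 := by
    convert cross_ne_zero_of_not_collinear hnd using 1
    simp only [cross, Prod.fst_sub, Prod.snd_sub, Prod.fst_neg, Prod.snd_neg]
    ring
  have hreflect {P Q : ℝ × ℝ} (h : edgeCond (fun x => Pi₁ x - r x) P Q) :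
      edgeCond (fun x => -Pi₁ (-x) - r x) (-P) (-Q) := by
    convert edgeCond_neg_comp_neg h using 2 with x
    rw [map_neg]
    abel
  have hPi₂_eq : Pi₂ = fun x => -Pi₁ (-x) :=
    hPi₂.eq_of_edgeCond hPi₁.neg_comp_neg r.continuous_of_finiteDimensional hK₂ hf₁ hf₂ hf₃
      (hreflect he₁) (by simpa using hreflect he₂) (by simpa using hreflect he₃)
  have hK₂_eq : convexHull ℝ ({-A, -B, B} : Set (ℝ × ℝ)) = -convexHull ℝ {A, B, -B} := by
    rw [← convexHull_neg]
    simp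
  have hodd : ∫ x in -convexHull ℝ {A, B, -B}, (r x - -Pi₁ (-x))
      = -∫ x in convexHull ℝ {A, B, -B}, (r x - Pi₁ x) := by
    rw [← integral_neg, ← setIntegral_neg_comp_neg volume (fun y => -(r y - Pi₁ y))]
    refine integral_congr_ae (Filter.Eventually.of_forall fun x => ?_)
    simp only [map_neg]
    abel
  simp only [hPi₂_eq, hK₂_eq, hodd, add_neg_cancel]
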